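/- The operator Π_w := (1/w)·ρ_w on the weight-w component of the tensor algebra is idempotent: Π_w ∘ Π_w = Π_w. -/

import Mathlib

/- We model the weight-graded tensor algebra of a `ℚ`-vector space with basis `V`
as the free `ℚ`-module on words `List V`; elementary tensors are single words. -/

/-- Prepend a letter to every word (linear "a ⊗ -"). -/
noncomputable def consL {V : Type*} (a : V) (x : List V →₀ ℚ) : List V →₀ ℚ :=
  Finsupp.mapDomain (fun l => a :: l) x

/-- Append a letter to every word (linear "- ⊗ a"). -/
noncomputable def appR {V : Type*} (a : V) (x : List V →₀ ℚ) : List V →₀ ℚ :=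
  Finsupp.mapDomain (fun l => l ++ [a]) x

/-- The shuffle product of two elementary tensors (words). -/
noncomputable def shuffle {V : Type*} : List V → List V → (List V →₀ ℚ)
  | [], v => Finsupp.single v 1
  | a :: u, [] => Finsupp.single (a :: u) 1
  | a :: u, b :: v => consL a (shuffle u (b :: v)) + consL b (shuffle (a :: u) v)
  termination_by u v => u.length + v.length

/-- The Dynkin-type operator `ρ` on elementary tensors:
`ρ₁ = id` and `ρ_w(a₁⊗…⊗a_w) = ρ_{w-1}(a₁⊗…⊗a_{w-1}) ⊗ a_w − ρ_{w-1}(a₂⊗…⊗a_w) ⊗ a₁`. -/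
noncomputable def rho {V : Type*} : List V → (List V →₀ ℚ)
  | [] => 0
  | [a] => Finsupp.single [a] 1
  | a :: b :: l =>
      appR ((b :: l).getLast (List.cons_ne_nil _ _)) (rho (a :: (b :: l).dropLast))
        - appR a (rho (b :: l))
  termination_by l => l.length
  decreasing_by all_goals simp [List.length_dropLast]

/-- Linear extension of `ρ`. -/
noncomputable def rhoL {V : Type*} (x : List V →₀ ℚ) : List V →₀ ℚ :=
  x.sum fun l c => c • rho l


/-!
For a word `x` of length `n`, Ree's identity `n • x = ∑ₖ (x₁⋯xₖ) ⧢ ρ(xₖ₊₁⋯xₙ)` is proved by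
appending a letter to `x`: the recursion of `ρ` and the last-letter recursion of `⧢` make the new
terms telescope. Applying `ρ` kills every term with a nonempty prefix, because `ρ` annihilates
nontrivial shuffles: writing `ρ t = ρ(init t)·last t − ρ(tail t)·head t`, the last-letter and the
first-letter recursions of `u ⧢ v` express `ρ(u ⧢ v)` through shorter shuffles, and the boundary
terms cancel. What remains is `ρ (ρ x) = n • ρ x`.
-/

open Finsupp

section LinearExtension

variable {α R M : Type*}

theorem linearCombination_congr_of_mem_supported [Semiring R] [AddCommMonoid M] [Module R M]
    {s : Set α} {x : α →₀ R} (hx : x ∈ supported R R s) {f g : α → M} (h : Set.EqOn f g s) :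
    linearCombination R f x = linearCombination R g x := by
  simp only [linearCombination_apply]
  exact Finsupp.sum_congr fun t ht => by rw [h (hx ht)]

theorem linearCombination_sub_left [Ring R] [AddCommGroup M] [Module R M]
    (f g : α → M) (x : α →₀ R) :
    linearCombination R (f - g) x = linearCombination R f x - linearCombination R g x := by
  simp only [linearCombination_apply, Pi.sub_apply, smul_sub, Finsupp.sum_sub]

theorem linearCombination_smul_left [CommSemiring R] [AddCommMonoid M] [Module R M]
    (c : R) (f : α → M) (x : α →₀ R) :
    linearCombination R (fun a => c • f a) x = c • linearCombination R f x := by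
  simp only [linearCombination_apply, Finsupp.smul_sum, smul_comm c]

end LinearExtension

section Words

variable {V : Type*}

theorem rhoL_eq_linearCombination (x : List V →₀ ℚ) : rhoL x = linearCombination ℚ rho x := rfl

theorem consL_add (a : V) (x y : List V →₀ ℚ) : consL a (x + y) = consL a x + consL a y :=
  mapDomain_add

@[simp] theorem consL_single (a : V) (l : List V) (c : ℚ) :
    consL a (single l c) = single (a :: l) c :=
  mapDomain_single

theorem appR_add (a : V) (x y : List V →₀ ℚ) : appR a (x + y) = appR a x + appR a y :=
  mapDomain_add

theorem appR_sub (a : V) (x y : List V →₀ ℚ) : appR a (x - y) = appR a x - appR a y :=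
  map_sub (lmapDomain ℚ ℚ fun l : List V => l ++ [a]) x y

theorem appR_smul (a : V) (c : ℚ) (x : List V →₀ ℚ) : appR a (c • x) = c • appR a x :=
  mapDomain_smul c x

@[simp] theorem appR_zero (a : V) : appR a (0 : List V →₀ ℚ) = 0 := mapDomain_zero

@[simp] theorem appR_single (a : V) (l : List V) (c : ℚ) :
    appR a (single l c) = single (l ++ [a]) c :=
  mapDomain_single

theorem consL_appR (a c : V) (x : List V →₀ ℚ) : consL a (appR c x) = appR c (consL a x) := by
  simp only [consL, appR, ← mapDomain_comp]
  rfl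

theorem appR_linearCombination (c : V) (f : List V → List V →₀ ℚ) (x : List V →₀ ℚ) :
    appR c (linearCombination ℚ f x) = linearCombination ℚ (fun l => appR c (f l)) x :=
  apply_linearCombination ℚ (lmapDomain ℚ ℚ fun l : List V => l ++ [c]) f x

theorem linearCombination_appR (f : List V → List V →₀ ℚ) (c : V) (x : List V →₀ ℚ) :
    linearCombination ℚ f (appR c x) = linearCombination ℚ (fun l => f (l ++ [c])) x :=
  linearCombination_mapDomain ℚ _ x

theorem linearCombination_consL (f : List V → List V →₀ ℚ) (a : V) (x : List V →₀ ℚ) :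
    linearCombination ℚ f (consL a x) = linearCombination ℚ (fun l => f (a :: l)) x :=
  linearCombination_mapDomain ℚ _ x

@[simp] theorem shuffle_nil_left (v : List V) : shuffle [] v = single v 1 := by
  rw [shuffle]

@[simp] theorem shuffle_nil_right (u : List V) : shuffle u [] = single u 1 := by
  cases u <;> rw [shuffle]

theorem shuffle_cons_cons (a b : V) (u v : List V) :
    shuffle (a :: u) (b :: v) = consL a (shuffle u (b :: v)) + consL b (shuffle (a :: u) v) := by
  rw [shuffle]

theorem shuffle_append_singleton (u v : List V) (a b : V) :
    shuffle (u ++ [a]) (v ++ [b]) =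
      appR b (shuffle (u ++ [a]) v) + appR a (shuffle u (v ++ [b])) := by
  induction u generalizing v with
  | nil =>
    induction v with
    | nil => simp [shuffle_cons_cons]
    | cons b' v ih =>
      simp only [List.nil_append, List.cons_append, shuffle_cons_cons] at ih ⊢
      rw [ih]
      simp only [shuffle_nil_left, consL_add, consL_appR, consL_single, appR_add, appR_single,
        List.cons_append]
      abel
  | cons a' u ihu =>
    induction v with
    | nil =>
      have ih := ihu []
      simp only [List.nil_append] at ih ⊢
      simp only [List.cons_append, shuffle_cons_cons]
      rw [ih]
      simp only [shuffle_nil_right, consL_add, consL_appR, consL_single, appR_add, appR_single,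
        List.cons_append]
      abel
    | cons b' v ihv =>
      have ih := ihu (b' :: v)
      simp only [List.cons_append, shuffle_cons_cons] at ih ihv ⊢
      rw [ih, ihv]
      simp only [consL_add, consL_appR, appR_add]
      abel

theorem shuffle_eq_consL_add_consL {u v : List V} (hu : u ≠ []) (hv : v ≠ []) :
    shuffle u v = consL (u.head hu) (shuffle u.tail v) + consL (v.head hv) (shuffle u v.tail) := by
  obtain ⟨a, u, rfl⟩ := List.exists_cons_of_ne_nil hu
  obtain ⟨b, v, rfl⟩ := List.exists_cons_of_ne_nil hv
  exact shuffle_cons_cons a b u v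

theorem shuffle_eq_appR_add_appR {u v : List V} (hu : u ≠ []) (hv : v ≠ []) :
    shuffle u v =
      appR (v.getLast hv) (shuffle u v.dropLast) + appR (u.getLast hu) (shuffle u.dropLast v) := by
  obtain ⟨u, a, rfl⟩ := (List.eq_nil_or_concat u).resolve_left hu
  obtain ⟨v, b, rfl⟩ := (List.eq_nil_or_concat v).resolve_left hv
  simpa using shuffle_append_singleton u v a b

variable (V) in
def weightComponent (n : ℕ) : Submodule ℚ (List V →₀ ℚ) :=
  supported ℚ ℚ {t | t.length = n}

theorem mem_weightComponent {n : ℕ} {x : List V →₀ ℚ} :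
    x ∈ weightComponent V n ↔ ∀ t ∈ x.support, t.length = n :=
  Iff.rfl

theorem single_mem_weightComponent (l : List V) (c : ℚ) :
    single l c ∈ weightComponent V l.length :=
  single_mem_supported ℚ c rfl

theorem mapDomain_mem_weightComponent {f : List V → List V} {k n : ℕ}
    (hf : ∀ l, (f l).length = l.length + k) {x : List V →₀ ℚ} (hx : x ∈ weightComponent V n) :
    mapDomain f x ∈ weightComponent V (n + k) := by
  classical
  intro t ht
  obtain ⟨l, hl, rfl⟩ := Finset.mem_image.1 (mapDomain_support ht)
  simp [hf, mem_weightComponent.1 hx l hl]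

theorem appR_mem_weightComponent (a : V) {n : ℕ} {x : List V →₀ ℚ}
    (hx : x ∈ weightComponent V n) : appR a x ∈ weightComponent V (n + 1) :=
  mapDomain_mem_weightComponent (by simp) hx

theorem consL_mem_weightComponent (a : V) {n : ℕ} {x : List V →₀ ℚ}
    (hx : x ∈ weightComponent V n) : consL a x ∈ weightComponent V (n + 1) :=
  mapDomain_mem_weightComponent (by simp) hx

theorem shuffle_mem_weightComponent (u v : List V) :
    shuffle u v ∈ weightComponent V (u.length + v.length) := by
  induction u, v using shuffle.induct with
  | case1 v => simpa using single_mem_weightComponent v 1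
  | case2 a u => simpa using single_mem_weightComponent (a :: u) 1
  | case3 a u b v ihu ihv =>
    rw [shuffle_cons_cons]
    refine add_mem ?_ ?_
    · convert consL_mem_weightComponent a ihu using 2
      simp only [List.length_cons]; omega
    · exact consL_mem_weightComponent b ihv

theorem rho_mem_weightComponent (l : List V) : rho l ∈ weightComponent V l.length := by
  induction l using rho.induct with
  | case1 => rw [rho]; exact zero_mem _
  | case2 a => rw [rho]; exact single_mem_weightComponent [a] 1
  | case3 a b l ih₁ ih₂ =>
    rw [rho]
    refine sub_mem ?_ (appR_mem_weightComponent a ih₂)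
    convert appR_mem_weightComponent _ ih₁ using 2
    simp

@[simp] theorem rho_nil : rho ([] : List V) = 0 := by
  rw [rho]

@[simp] theorem rho_singleton (a : V) : rho [a] = single [a] 1 := by
  rw [rho]

noncomputable def rhoDropLast (t : List V) : List V →₀ ℚ :=
  if h : t = [] then 0 else appR (t.getLast h) (rho t.dropLast)

noncomputable def rhoTail : List V → List V →₀ ℚ
  | [] => 0
  | a :: t => appR a (rho t)

@[simp] theorem rhoDropLast_append_singleton (t : List V) (c : V) :
    rhoDropLast (t ++ [c]) = appR c (rho t) := by
  simp [rhoDropLast]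

theorem rho_eq_rhoDropLast_sub_rhoTail {t : List V} (ht : 2 ≤ t.length) :
    rho t = rhoDropLast t - rhoTail t := by
  obtain _ | ⟨a, _ | ⟨b, l⟩⟩ := t
  · simp at ht
  · simp at ht
  · rw [rho]
    simp [rhoDropLast, rhoTail, List.getLast_cons]

theorem rho_cons_append_singleton (h : V) (s : List V) (z : V) :
    rho (h :: (s ++ [z])) = appR z (rho (h :: s)) - appR h (rho (s ++ [z])) := by
  rw [rho_eq_rhoDropLast_sub_rhoTail (by simp), ← List.cons_append, rhoDropLast_append_singleton]
  rfl

theorem linearCombination_rhoDropLast_appR (c : V) (x : List V →₀ ℚ) :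
    linearCombination ℚ rhoDropLast (appR c x) = appR c (linearCombination ℚ rho x) := by
  simp only [linearCombination_appR, appR_linearCombination, rhoDropLast_append_singleton]

theorem linearCombination_rhoTail_consL (a : V) (x : List V →₀ ℚ) :
    linearCombination ℚ rhoTail (consL a x) = appR a (linearCombination ℚ rho x) := by
  rw [linearCombination_consL, appR_linearCombination]
  rfl

theorem rho_shuffle {u v : List V} (hu : u ≠ []) (hv : v ≠ []) :
    linearCombination ℚ rho (shuffle u v) =
      appR (v.getLast hv) (linearCombination ℚ rho (shuffle u v.dropLast))
        + appR (u.getLast hu) (linearCombination ℚ rho (shuffle u.dropLast v))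
        - appR (u.head hu) (linearCombination ℚ rho (shuffle u.tail v))
        - appR (v.head hv) (linearCombination ℚ rho (shuffle u v.tail)) := by
  have hlen : 2 ≤ u.length + v.length := by
    have := List.length_pos_iff.2 hu
    have := List.length_pos_iff.2 hv
    omega
  have hsplit : linearCombination ℚ rho (shuffle u v) =
      linearCombination ℚ rhoDropLast (shuffle u v) -
        linearCombination ℚ rhoTail (shuffle u v) := by
    rw [← linearCombination_sub_left]
    exact linearCombination_congr_of_mem_supported (shuffle_mem_weightComponent u v)
      fun t ht => rho_eq_rhoDropLast_sub_rhoTail (ht.symm ▸ hlen)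
  rw [hsplit]
  nth_rw 1 [shuffle_eq_appR_add_appR hu hv]
  rw [shuffle_eq_consL_add_consL hu hv]
  simp only [map_add, linearCombination_rhoDropLast_appR, linearCombination_rhoTail_consL]
  abel

theorem rho_shuffle_eq_zero {u v : List V} (hu : u ≠ []) (hv : v ≠ []) :
    linearCombination ℚ rho (shuffle u v) = 0 := by
  induction hn : u.length + v.length using Nat.strong_induction_on generalizing u v with
  | _ n ih =>
    have hshorter : ∀ {p q : List V}, p.length + q.length < n → p ≠ [] → q ≠ [] →
        linearCombination ℚ rho (shuffle p q) = 0 := fun h hp hq => ih _ h hp hq rfl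
    have hleft : appR (u.getLast hu) (linearCombination ℚ rho (shuffle u.dropLast v)) =
        appR (u.head hu) (linearCombination ℚ rho (shuffle u.tail v)) := by
      obtain _ | ⟨a, _ | ⟨b, l⟩⟩ := u
      · exact absurd rfl hu
      · rfl
      · rw [hshorter (by simp at hn ⊢; omega) (by simp) hv,
          hshorter (by simp at hn ⊢; omega) (by simp) hv, appR_zero, appR_zero]
    have hright : appR (v.getLast hv) (linearCombination ℚ rho (shuffle u v.dropLast)) =
        appR (v.head hv) (linearCombination ℚ rho (shuffle u v.tail)) := by
      obtain _ | ⟨a, _ | ⟨b, l⟩⟩ := v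
      · exact absurd rfl hv
      · rfl
      · rw [hshorter (by simp at hn ⊢; omega) hu (by simp),
          hshorter (by simp at hn ⊢; omega) hu (by simp), appR_zero, appR_zero]
    rw [rho_shuffle hu hv, hleft, hright]
    abel

theorem linearCombination_shuffle_nil (x : List V →₀ ℚ) :
    linearCombination ℚ (shuffle []) x = x := by
  induction x using Finsupp.induction_linear with
  | zero => simp
  | add x y hx hy => rw [map_add, hx, hy]
  | single l c => simp

theorem linearCombination_shuffle_appR (d : List V) (g c : V) (x : List V →₀ ℚ) :
    linearCombination ℚ (shuffle (d ++ [g])) (appR c x) =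
      appR c (linearCombination ℚ (shuffle (d ++ [g])) x)
        + appR g (linearCombination ℚ (shuffle d) (appR c x)) := by
  induction x using Finsupp.induction_linear with
  | zero => simp
  | add x y hx hy =>
    simp only [appR_add, map_add, hx, hy]
    abel
  | single l a => simp [shuffle_append_singleton, appR_smul]

/-- `reeSum u s = ∑_{k < s.length} (u ++ s.take k) ⧢ ρ (s.drop k)`. -/
noncomputable def reeSum (u : List V) : List V → List V →₀ ℚ
  | [] => 0
  | h :: s => linearCombination ℚ (shuffle u) (rho (h :: s)) + reeSum (u ++ [h]) s

theorem reeSum_append_singleton (d : List V) (g : V) (s : List V) (z : V) :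
    reeSum (d ++ [g]) (s ++ [z]) =
      appR z (reeSum (d ++ [g]) s) + appR g (linearCombination ℚ (shuffle d) (rho (s ++ [z])))
        + single (d ++ [g] ++ s ++ [z]) 1 := by
  induction s generalizing d g with
  | nil =>
    have h := shuffle_append_singleton d [] g z
    simp only [List.nil_append, shuffle_nil_right, appR_single] at h
    simp [reeSum, h, add_comm]
  | cons h s ih =>
    rw [List.cons_append, reeSum, ih, reeSum, rho_cons_append_singleton, map_sub,
      linearCombination_shuffle_appR, linearCombination_shuffle_appR, map_sub, appR_add, appR_sub]
    simp only [List.append_assoc, List.cons_append, List.nil_append]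
    abel

theorem reeSum_nil_append_singleton (s : List V) (z : V) :
    reeSum [] (s ++ [z]) = appR z (reeSum [] s) + single (s ++ [z]) 1 := by
  cases s with
  | nil => simp [reeSum]
  | cons h s =>
    have := reeSum_append_singleton [] h s z
    rw [List.nil_append] at this
    rw [List.cons_append, reeSum, List.nil_append, this, reeSum, rho_cons_append_singleton]
    simp only [linearCombination_shuffle_nil, appR_add, List.nil_append, List.cons_append]
    abel

theorem reeSum_nil (x : List V) : reeSum [] x = (x.length : ℚ) • single x 1 := by
  induction x using List.reverseRecOn with
  | nil => simp [reeSum]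
  | append_singleton s z ih =>
    rw [reeSum_nil_append_singleton, ih, appR_smul, appR_single, List.length_append,
      List.length_singleton, Nat.cast_add, Nat.cast_one, add_smul, one_smul]

theorem rho_reeSum {u : List V} (hu : u ≠ []) (s : List V) :
    linearCombination ℚ rho (reeSum u s) = 0 := by
  induction s generalizing u with
  | nil => simp [reeSum]
  | cons h s ih =>
    rw [reeSum, map_add, ih (by simp), add_zero, apply_linearCombination]
    have hzero :
        Set.EqOn (linearCombination ℚ rho ∘ shuffle u) 0 {t | t.length = s.length + 1} :=
      fun t ht => rho_shuffle_eq_zero hu (List.ne_nil_of_length_pos (by simp [ht.out]))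
    rw [linearCombination_congr_of_mem_supported (rho_mem_weightComponent (h :: s)) hzero,
      linearCombination_zero_apply]

theorem rho_rho (x : List V) :
    linearCombination ℚ rho (rho x) = (x.length : ℚ) • rho x := by
  have hree : linearCombination ℚ rho (reeSum [] x) = linearCombination ℚ rho (rho x) := by
    cases x with
    | nil => simp [reeSum]
    | cons h s =>
      rw [reeSum, map_add, linearCombination_shuffle_nil, rho_reeSum (by simp), add_zero]
  rw [← hree, reeSum_nil, map_smul, linearCombination_single, one_smul]

end Words

theorem stmt_4_general (V : Type*) (w : ℕ) (x : List V →₀ ℚ)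
    (hx : ∀ l ∈ x.support, l.length = w) :
    (w : ℚ)⁻¹ • rhoL ((w : ℚ)⁻¹ • rhoL x) = (w : ℚ)⁻¹ • rhoL x := by
  have hrho : Set.EqOn (linearCombination ℚ rho ∘ rho) (fun l => (w : ℚ) • rho l)
      {t : List V | t.length = w} := fun l hl => by
    rw [Function.comp_apply, rho_rho, hl.out]
  have hsq : linearCombination ℚ rho (linearCombination ℚ rho x) =
      (w : ℚ) • linearCombination ℚ rho x := by
    rw [apply_linearCombination, linearCombination_congr_of_mem_supported hx hrho,
      linearCombination_smul_left]
  rw [rhoL_eq_linearCombination, rhoL_eq_linearCombination, map_smul, hsq, smul_smul, smul_smul]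
  congr 1
  simpa using mul_self_mul_inv (w : ℚ)⁻¹

/-- The operator `Π_w := (1/w)·ρ_w` on the weight-`w` component of the tensor algebra
is idempotent. -/
theorem stmt_4 (V : Type*) (w : ℕ) (hw : 1 ≤ w) (x : List V →₀ ℚ)
    (hx : ∀ l ∈ x.support, l.length = w) :
    (w : ℚ)⁻¹ • rhoL ((w : ℚ)⁻¹ • rhoL x) = (w : ℚ)⁻¹ • rhoL x :=
  stmt_4_general V w x hx
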